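/- Let H be a complex Hilbert space and A a bounded self-adjoint operator on H whose spectrum is contained in [λ₀, ∞) for some λ₀ > 0. Fix T > 0, θ ∈ (0, 1], and e ∈ H, and define φ(t) = (1/T) e^{-(T−t)A} e + (2t/T) A e^{-(T−t)A} e for t ∈ [0,T]. Then ∫₀^T ‖A^{θ/2} φ(t)‖² dt ≤ ‖A^{θ/2} e‖²/T + 2 ‖A^{(1+θ)/2} e‖². -/

import Mathlib

open MeasureTheory

/-- Fractional power `A^s` of a (positive self-adjoint) bounded operator, via the
continuous functional calculus. -/
noncomputable def fracPow {H : Type*} [NormedAddCommGroup H] [InnerProductSpace ℂ H]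
    [CompleteSpace H] (A : H →L[ℂ] H) (s : ℝ) : H →L[ℂ] H :=
  cfc (fun x : ℝ => x ^ s) A

/-!
Every operator in the statement is a function of `A`, so the continuous functional calculus
reduces the inequality to a scalar one at each spectral value `x > 0`. There `A^{θ/2} φ(t)` has
symbol `x^{θ/2} g_t(x)` with `g_t(x) = (1/T + 2tx/T) e^{-(T-t)x}`, and
`g_t(x)² = e^{-2(T-t)x}/T² + (4tx/T² + 4t²x²/T²) e^{-2(T-t)x}`. The first summand is at most
`1/T²`, and the second is the `t`-derivative of `(2t²x/T²) e^{-2(T-t)x}`, which vanishes at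
`t = 0`. Hence `∫₀^T g_t(x)² dt ≤ 1/T + 2x`, and multiplying by `x^θ` gives the symbol of the
right-hand side.
-/

open scoped InnerProductSpace

section ExpCFC

variable {𝒜 : Type*} [NormedRing 𝒜] [StarRing 𝒜] [NormedAlgebra ℝ 𝒜] [StarModule ℝ 𝒜]
  [ContinuousFunctionalCalculus ℝ 𝒜 IsSelfAdjoint] {a : 𝒜}

lemma IsSelfAdjoint.exp_smul_eq_cfc (ha : IsSelfAdjoint a) (r : ℝ) :
    NormedSpace.exp (r • a) = cfc (fun x => Real.exp (r * x)) a := by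
  rw [cfc_comp_const_mul r Real.exp a,
    CFC.real_exp_eq_normedSpace_exp ((IsSelfAdjoint.all r).smul ha)]

lemma IsSelfAdjoint.cfc_affine_mul_exp (ha : IsSelfAdjoint a) (c d r : ℝ) :
    cfc (fun x => (c + d * x) * Real.exp (r * x)) a
      = c • NormedSpace.exp (r • a) + d • (a * NormedSpace.exp (r • a)) := by
  rw [cfc_mul (fun x => c + d * x) _ a, cfc_const_add c _ a, cfc_const_mul_id d a,
    ← ha.exp_smul_eq_cfc, add_mul, Algebra.algebraMap_eq_smul_one, smul_mul_assoc, one_mul,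
    smul_mul_assoc]

end ExpCFC

lemma continuousOn_intervalIntegral_of_continuousOn_uncurry {F : ℝ → ℝ → ℝ} {s : Set ℝ}
    (hF : ContinuousOn (Function.uncurry F) (Set.univ ×ˢ s)) (a b : ℝ) :
    ContinuousOn (fun z => ∫ t in a..b, F t z) s := by
  rw [continuousOn_iff_continuous_domRestrict]
  refine intervalIntegral.continuous_parametric_intervalIntegral_of_continuous'
    (f := fun (z : s) t => F t z) ?_ a b
  exact hF.comp_continuous (f := fun p : s × ℝ => (p.2, (p.1 : ℝ))) (by fun_prop)
    fun p => ⟨Set.mem_univ _, p.1.2⟩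

section HilbertCFC

variable {H : Type*} [NormedAddCommGroup H] [InnerProductSpace ℂ H] [CompleteSpace H]
  {A : H →L[ℂ] H}

lemma norm_cfc_apply_sq (f : ℝ → ℝ) (hf : ContinuousOn f (spectrum ℝ A)) (x : H) :
    ‖cfc f A x‖ ^ 2 = RCLike.re ⟪x, cfc (fun z => f z ^ 2) A x⟫_ℂ := by
  have hsa : IsSelfAdjoint (cfc f A) := cfc_predicate f A
  simp only [sq, cfc_mul f f A, mul_apply_eq_comp]
  rw [← ContinuousLinearMap.adjoint_inner_left, hsa.adjoint_eq, inner_self_eq_norm_mul_norm]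

lemma re_inner_cfc_const_mul_sq_add (f g : ℝ → ℝ) (hf : ContinuousOn f (spectrum ℝ A))
    (hg : ContinuousOn g (spectrum ℝ A)) (c d : ℝ) (x : H) :
    RCLike.re ⟪x, cfc (fun z => c * f z ^ 2 + d * g z ^ 2) A x⟫_ℂ
      = c * ‖cfc f A x‖ ^ 2 + d * ‖cfc g A x‖ ^ 2 := by
  rw [norm_cfc_apply_sq f hf, norm_cfc_apply_sq g hg,
    cfc_add (a := A) (fun z => c * f z ^ 2) (fun z => d * g z ^ 2),
    cfc_const_mul c (fun z => f z ^ 2) A, cfc_const_mul d (fun z => g z ^ 2) A,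
    add_apply, smul_apply, smul_apply, inner_add_right, RCLike.real_smul_eq_coe_smul (K := ℂ),
    RCLike.real_smul_eq_coe_smul (K := ℂ), inner_smul_real_right, inner_smul_real_right, map_add,
    RCLike.smul_re, RCLike.smul_re]

lemma re_inner_cfc_le_of_le {f g : ℝ → ℝ}
    (hf : ContinuousOn f (spectrum ℝ A)) (hg : ContinuousOn g (spectrum ℝ A))
    (hfg : ∀ z ∈ spectrum ℝ A, f z ≤ g z) (x : H) :
    RCLike.re ⟪x, cfc f A x⟫_ℂ ≤ RCLike.re ⟪x, cfc g A x⟫_ℂ := by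
  have := ((ContinuousLinearMap.le_def _ _).1 (cfc_mono hfg hf hg)).re_inner_nonneg_right x
  rw [sub_apply, inner_sub_right, map_sub] at this
  linarith

lemma intervalIntegral_re_inner_cfc (hA : IsSelfAdjoint A) {F : ℝ → ℝ → ℝ} {a b : ℝ}
    (hab : a ≤ b) (hF : ContinuousOn (Function.uncurry F) (Set.Icc a b ×ˢ spectrum ℝ A)) (x : H) :
    ∫ t in a..b, RCLike.re ⟪x, cfc (F t) A x⟫_ℂ
      = RCLike.re ⟪x, cfc (fun z => ∫ t in a..b, F t z) A x⟫_ℂ := by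
  obtain ⟨C, hC⟩ := (isCompact_Icc.prod (spectrum.isCompact A)).exists_bound_of_continuousOn hF
  have hF' : ContinuousOn (Function.uncurry F) (Set.Ioc a b ×ˢ spectrum ℝ A) :=
    hF.mono (Set.prod_mono Set.Ioc_subset_Icc_self subset_rfl)
  have hbound : ∀ᵐ t ∂(volume.restrict (Set.Ioc a b)), ∀ z ∈ spectrum ℝ A, ‖F t z‖ ≤ C :=
    ae_restrict_of_forall_mem measurableSet_Ioc fun t ht z hz =>
      hC (t, z) ⟨Set.Ioc_subset_Icc_self ht, hz⟩
  let L : (H →L[ℂ] H) →L[ℝ] ℝ := Complex.reCLM ∘L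
    ((innerSL ℂ x) ∘L (ContinuousLinearMap.apply ℂ H x)).restrictScalars ℝ
  change ∫ t in a..b, L (cfc (F t) A) = L (cfc (fun z => ∫ t in a..b, F t z) A)
  simp only [intervalIntegral.integral_of_le hab]
  rw [cfc_setIntegral measurableSet_Ioc F (fun _ => C) A hF' hbound (hasFiniteIntegral_const C),
    L.integral_comp_comm (integrableOn_cfc measurableSet_Ioc F (fun _ => C) A hF' hbound
      (hasFiniteIntegral_const C))]

lemma intervalIntegral_norm_cfc_apply_sq_le (hA : IsSelfAdjoint A) {F : ℝ → ℝ → ℝ}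
    {g : ℝ → ℝ} {a b : ℝ} (hab : a ≤ b)
    (hF : ContinuousOn (Function.uncurry F) (Set.univ ×ˢ spectrum ℝ A))
    (hg : ContinuousOn g (spectrum ℝ A)) (hFg : ∀ z ∈ spectrum ℝ A, ∫ t in a..b, F t z ^ 2 ≤ g z)
    (x : H) :
    ∫ t in a..b, ‖cfc (F t) A x‖ ^ 2 ≤ RCLike.re ⟪x, cfc g A x⟫_ℂ := by
  have hFt : ∀ t, ContinuousOn (F t) (spectrum ℝ A) := fun t =>
    hF.comp (Continuous.prodMk_right t).continuousOn fun _ hz => ⟨Set.mem_univ _, hz⟩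
  have hF2 : ContinuousOn (Function.uncurry fun t z => F t z ^ 2) (Set.univ ×ˢ spectrum ℝ A) :=
    hF.pow 2
  simp_rw [fun t => norm_cfc_apply_sq (F t) (hFt t) x]
  rw [intervalIntegral_re_inner_cfc hA hab
    (hF2.mono (Set.prod_mono (Set.subset_univ _) le_rfl)) x]
  exact re_inner_cfc_le_of_le (continuousOn_intervalIntegral_of_continuousOn_uncurry hF2 a b) hg
    hFg x

end HilbertCFC

noncomputable def phiSymbol (T t x : ℝ) : ℝ :=
  (1 / T + 2 * t / T * x) * Real.exp ((t - T) * x)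

lemma continuous_phiSymbol (T : ℝ) : Continuous (Function.uncurry (phiSymbol T)) := by
  unfold phiSymbol
  fun_prop

lemma integral_phiSymbol_sq_le {T x : ℝ} (hT : 0 < T) (hx : 0 ≤ x) :
    ∫ t in (0:ℝ)..T, phiSymbol T t x ^ 2 ≤ 1 / T + 2 * x := by
  set E : ℝ → ℝ := fun t => Real.exp ((t - T) * x)
  have hE : Continuous E := by fun_prop
  set G : ℝ → ℝ := fun t => 2 * x / T ^ 2 * (t * E t) ^ 2
  set G' : ℝ → ℝ := fun t => 4 * x / T ^ 2 * (t * E t ^ 2 + t ^ 2 * x * E t ^ 2)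
  have hG : ∀ t, HasDerivAt G (G' t) t := by
    intro t
    have hEt : HasDerivAt E (E t * x) t := by
      simpa using (((hasDerivAt_id t).sub_const T).mul_const x).exp
    refine ((((hasDerivAt_id t).mul hEt).pow 2).const_mul (2 * x / T ^ 2)).congr_deriv ?_
    simp only [G', Pi.mul_apply, id]
    ring
  have hsplit : ∀ t, phiSymbol T t x ^ 2 = E t ^ 2 / T ^ 2 + G' t := by
    intro t
    simp only [phiSymbol, G', E]
    field_simp
    ring
  have hint₁ : IntervalIntegrable (fun t => E t ^ 2 / T ^ 2) volume 0 T :=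
    (by fun_prop : Continuous fun t => E t ^ 2 / T ^ 2).intervalIntegrable 0 T
  have hint₂ : IntervalIntegrable G' volume 0 T :=
    (by fun_prop : Continuous G').intervalIntegrable 0 T
  have hE_le : ∀ t ∈ Set.Icc 0 T, E t ^ 2 / T ^ 2 ≤ 1 / T ^ 2 := by
    intro t ht
    have : E t ≤ 1 :=
      Real.exp_le_one_iff.2 (mul_nonpos_of_nonpos_of_nonneg (by linarith [ht.2]) hx)
    gcongr
    exact pow_le_one₀ (Real.exp_nonneg _) this
  calc ∫ t in (0:ℝ)..T, phiSymbol T t x ^ 2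
      = (∫ t in (0:ℝ)..T, E t ^ 2 / T ^ 2) + (G T - G 0) := by
        simp only [hsplit]
        rw [intervalIntegral.integral_add hint₁ hint₂,
          intervalIntegral.integral_eq_sub_of_hasDerivAt (fun t _ => hG t) hint₂]
    _ ≤ (∫ _ in (0:ℝ)..T, 1 / T ^ 2) + (G T - G 0) := by
        gcongr
        exact intervalIntegral.integral_mono_on hT.le hint₁ intervalIntegrable_const hE_le
    _ = 1 / T + 2 * x := by
        simp only [G, E, intervalIntegral.integral_const, smul_eq_mul, sub_self, zero_mul,
          Real.exp_zero]
        field_simp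
        ring

lemma integral_rpow_mul_phiSymbol_sq_le {T x : ℝ} (hT : 0 < T) (hx : 0 < x) (θ : ℝ) :
    ∫ t in (0:ℝ)..T, (x ^ (θ / 2) * phiSymbol T t x) ^ 2
      ≤ 1 / T * (x ^ (θ / 2)) ^ 2 + 2 * (x ^ ((1 + θ) / 2)) ^ 2 := by
  have hsq : (x ^ ((1 + θ) / 2)) ^ 2 = x * (x ^ (θ / 2)) ^ 2 := by
    rw [← Real.rpow_natCast, ← Real.rpow_natCast, ← Real.rpow_mul hx.le, ← Real.rpow_mul hx.le,
      show (1 + θ) / 2 * ((2 : ℕ) : ℝ) = 1 + θ / 2 * ((2 : ℕ) : ℝ) by push_cast; ring,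
      Real.rpow_add hx, Real.rpow_one]
  simp_rw [mul_pow, intervalIntegral.integral_const_mul]
  calc (x ^ (θ / 2)) ^ 2 * ∫ t in (0:ℝ)..T, phiSymbol T t x ^ 2
      ≤ (x ^ (θ / 2)) ^ 2 * (1 / T + 2 * x) :=
        mul_le_mul_of_nonneg_left (integral_phiSymbol_sq_le hT hx.le) (sq_nonneg _)
    _ = 1 / T * (x ^ (θ / 2)) ^ 2 + 2 * (x ^ ((1 + θ) / 2)) ^ 2 := by rw [hsq]; ring

theorem stmt13_general
    {H : Type*} [NormedAddCommGroup H] [InnerProductSpace ℂ H] [CompleteSpace H]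
    (A : H →L[ℂ] H) (hA : IsSelfAdjoint A)
    (lam : ℝ) (hlam : 0 < lam) (hspec : ∀ z ∈ spectrum ℂ A, lam ≤ z.re)
    (T : ℝ) (hT : 0 < T) (θ : ℝ) (e : H)
    (φ : ℝ → H)
    (hφ : ∀ t, φ t = (1 / T) • (NormedSpace.exp ((-(T - t)) • A)) e
      + (2 * t / T) • A ((NormedSpace.exp ((-(T - t)) • A)) e)) :
    (∫ t in (0:ℝ)..T, ‖fracPow A (θ / 2) (φ t)‖ ^ 2) ≤
      ‖fracPow A (θ / 2) e‖ ^ 2 / T + 2 * ‖fracPow A ((1 + θ) / 2) e‖ ^ 2 := by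
  have hpos : ∀ x ∈ spectrum ℝ A, 0 < x := fun x hx =>
    hlam.trans_le (by simpa using hspec _ (spectrum.algebraMap_mem ℂ hx))
  have hrpow : ∀ s : ℝ, ContinuousOn (fun x : ℝ => x ^ s) (spectrum ℝ A) := fun s =>
    continuousOn_id.rpow_const fun x hx => Or.inl (hpos x hx).ne'
  have hφA : ∀ t, fracPow A (θ / 2) (φ t) = cfc (fun x => x ^ (θ / 2) * phiSymbol T t x) A e := by
    intro t
    have hφt : φ t = cfc (phiSymbol T t) A e := by
      unfold phiSymbol
      rw [hφ t, hA.cfc_affine_mul_exp, neg_sub]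
      rfl
    rw [hφt, fracPow, cfc_mul _ _ A (hrpow _)
      ((continuous_phiSymbol T).uncurry_left t).continuousOn, mul_apply_eq_comp]
  have hF : ContinuousOn (Function.uncurry fun t x => x ^ (θ / 2) * phiSymbol T t x)
      (Set.univ ×ˢ spectrum ℝ A) :=
    (continuousOn_snd.rpow_const fun p hp => Or.inl (hpos _ hp.2).ne').mul
      (continuous_phiSymbol T).continuousOn
  simp_rw [hφA]
  calc ∫ t in (0:ℝ)..T, ‖cfc (fun x => x ^ (θ / 2) * phiSymbol T t x) A e‖ ^ 2
      ≤ RCLike.re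
          ⟪e, cfc (fun x => 1 / T * (x ^ (θ / 2)) ^ 2 + 2 * (x ^ ((1 + θ) / 2)) ^ 2) A e⟫_ℂ :=
        intervalIntegral_norm_cfc_apply_sq_le hA hT.le hF
          ((continuousOn_const.mul ((hrpow _).pow 2)).add
            (continuousOn_const.mul ((hrpow _).pow 2)))
          (fun x hx => integral_rpow_mul_phiSymbol_sq_le hT (hpos x hx) θ) e
    _ = ‖fracPow A (θ / 2) e‖ ^ 2 / T + 2 * ‖fracPow A ((1 + θ) / 2) e‖ ^ 2 := by
        rw [re_inner_cfc_const_mul_sq_add _ _ (hrpow _) (hrpow _), fracPow, fracPow]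
        ring

/-- For `A` self-adjoint with spectrum in `[λ₀, ∞)`, `λ₀ > 0`,
`θ ∈ (0,1]`, and `φ(t) = (1/T) e^{-(T-t)A} e + (2t/T) A e^{-(T-t)A} e`:
`∫₀^T ‖A^{θ/2} φ(t)‖² dt ≤ ‖A^{θ/2} e‖²/T + 2‖A^{(1+θ)/2} e‖²`. -/
theorem stmt13
    {H : Type*} [NormedAddCommGroup H] [InnerProductSpace ℂ H] [CompleteSpace H]
    (A : H →L[ℂ] H) (hA : IsSelfAdjoint A)
    (lam : ℝ) (hlam : 0 < lam) (hspec : ∀ z ∈ spectrum ℂ A, lam ≤ z.re)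
    (T : ℝ) (hT : 0 < T) (θ : ℝ) (hθ : θ ∈ Set.Ioc (0:ℝ) 1) (e : H)
    (φ : ℝ → H)
    (hφ : ∀ t, φ t = (1 / T) • (NormedSpace.exp ((-(T - t)) • A)) e
      + (2 * t / T) • A ((NormedSpace.exp ((-(T - t)) • A)) e)) :
    (∫ t in (0:ℝ)..T, ‖fracPow A (θ / 2) (φ t)‖ ^ 2) ≤
      ‖fracPow A (θ / 2) e‖ ^ 2 / T + 2 * ‖fracPow A ((1 + θ) / 2) e‖ ^ 2 :=
  stmt13_general A hA lam hlam hspec T hT θ e φ hφ
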